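/- arXiv:1810.10803 — 4 statements merged into one kernel-verified Lean document; each statement's English description precedes it below -/
import Mathlib

section
/- For all non-negative integers l and m, the identity ∑_{k=0}^{l} (−1)^k · C(2l+m−2k, l−k) · C(2l+m−k, k) = 1 holds, where C(n, k) denotes the binomial coefficient. -/
private def ff (n l k : ℕ) : ℤ :=
  (-1 : ℤ) ^ k * ((n - 2 * k).choose (l - k) : ℤ) * ((n - k).choose k : ℤ)

private def TT (n l : ℕ) : ℤ := ∑ k ∈ Finset.range (l + 1), ff n l k

private lemma TT_zero (n : ℕ) : TT n 0 = 1 := by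
  simp [TT, ff]

private lemma TT_diag (l : ℕ) : TT l l = 1 := by
  rw [TT, Finset.sum_range_succ']
  have h : ∀ i ∈ Finset.range l, ff l l (i + 1) = 0 := by
    intro i hi
    rw [Finset.mem_range] at hi
    rcases eq_or_lt_of_le (Nat.succ_le_of_lt hi) with h | h
    · -- i + 1 = l
      have h2 : (l - (i + 1)).choose (i + 1) = 0 :=
        Nat.choose_eq_zero_of_lt (by omega)
      simp [ff, h2]
    · -- i + 1 < l
      have h1 : (l - 2 * (i + 1)).choose (l - (i + 1)) = 0 :=
        Nat.choose_eq_zero_of_lt (by omega)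
      simp [ff, h1]
  rw [Finset.sum_congr rfl h]
  simp [ff]

private lemma pascal_t (a b : ℕ) (ha : 1 ≤ a) :
    (a + 1 - (b + 1)).choose (b + 1) = (a - (b + 1)).choose (b + 1) + (a - (b + 1)).choose b := by
  rcases le_or_gt (b + 1) a with h | h
  · obtain ⟨c, rfl⟩ : ∃ c, a = c + (b + 1) := ⟨a - (b + 1), by omega⟩
    rw [show c + (b + 1) + 1 - (b + 1) = c + 1 by omega,
        show c + (b + 1) - (b + 1) = c by omega]
    rw [Nat.choose_succ_succ]
    ring
  · rw [Nat.choose_eq_zero_of_lt (show a + 1 - (b + 1) < b + 1 by omega),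
        Nat.choose_eq_zero_of_lt (show a - (b + 1) < b + 1 by omega),
        Nat.choose_eq_zero_of_lt (show a - (b + 1) < b by omega)]

private lemma TT_rec (n l : ℕ) :
    TT (n + 2) (l + 1) = TT (n + 1) (l + 1) + TT (n + 1) l - TT n l := by
  have key : ∀ k ∈ Finset.range (l + 2),
      ff (n + 2) (l + 1) k =
        ff (n + 1) (l + 1) k + (if k ≤ l then ff (n + 1) l k else 0) +
          (if k = 0 then 0 else
            (-1 : ℤ) ^ k * ((n + 2 - 2 * k).choose (l + 1 - k) : ℤ) *
              ((n + 1 - k).choose (k - 1) : ℤ)) := by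
    intro k hk
    rw [Finset.mem_range] at hk
    match k with
    | 0 =>
      simp only [if_pos (Nat.zero_le l), if_pos rfl, add_zero]
      have h := Nat.choose_succ_succ (n + 1) l
      simp [ff]
      push_cast [h]
      ring
    | (j + 1) =>
      have hj : j ≤ l := by omega
      rcases eq_or_lt_of_le hj with hjl | hjl
      · -- k = l + 1
        subst hjl
        rw [if_neg (by omega), if_neg (by omega)]
        have h := pascal_t (n + 1) j (by omega)
        simp only [ff, show j + 1 - (j + 1) = 0 by omega, show j - j = 0 from by omega,
          Nat.choose_zero_right, Nat.cast_one]
        rw [show j + 1 - 1 = j by omega]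
        have h' : ((n + 2 - (j + 1)).choose (j + 1) : ℤ) =
            ((n + 1 - (j + 1)).choose (j + 1) : ℤ) + ((n + 1 - (j + 1)).choose j : ℤ) := by
          exact_mod_cast congrArg (Nat.cast (R := ℤ)) h
        rw [h']
        ring
      · -- 1 ≤ k ≤ l
        set k := j + 1 with hkdef
        rw [if_pos (by omega), if_neg (by omega)]
        rcases le_or_gt (2 * k) (n + 1) with h2k | h2k
        · have e1 : (n + 2 - 2 * k).choose (l + 1 - k) =
              (n + 1 - 2 * k).choose (l - k) + (n + 1 - 2 * k).choose (l + 1 - k) := by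
            rw [show n + 2 - 2 * k = (n + 1 - 2 * k) + 1 by omega,
                show l + 1 - k = (l - k) + 1 by omega]
            rw [Nat.choose_succ_succ]
          have e2 : (n + 2 - k).choose k =
              (n + 1 - k).choose k + (n + 1 - k).choose (k - 1) := by
            rw [show n + 2 - k = (n + 1 - k) + 1 by omega,
                show k = (k - 1) + 1 from by omega]
            rw [Nat.choose_succ_succ]
            rw [show k - 1 + 1 - 1 = k - 1 by omega]
            ring
          have e1' : ((n + 2 - 2 * k).choose (l + 1 - k) : ℤ) =
              ((n + 1 - 2 * k).choose (l - k) : ℤ) + ((n + 1 - 2 * k).choose (l + 1 - k) : ℤ) := by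
            exact_mod_cast congrArg (Nat.cast (R := ℤ)) e1
          have e2' : ((n + 2 - k).choose k : ℤ) =
              ((n + 1 - k).choose k : ℤ) + ((n + 1 - k).choose (k - 1) : ℤ) := by
            exact_mod_cast congrArg (Nat.cast (R := ℤ)) e2
          simp only [ff]
          rw [e1', e2']
          ring
        · have h1 : (n + 2 - 2 * k).choose (l + 1 - k) = 0 :=
            Nat.choose_eq_zero_of_lt (by omega)
          have h1' : (n + 1 - 2 * k).choose (l + 1 - k) = 0 :=
            Nat.choose_eq_zero_of_lt (by omega)
          have h2 : (n + 1 - k).choose k = 0 :=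
            Nat.choose_eq_zero_of_lt (by omega)
          simp [ff, h1, h1', h2]
  rw [TT, Finset.sum_congr rfl key, Finset.sum_add_distrib, Finset.sum_add_distrib]
  have S2 : (∑ k ∈ Finset.range (l + 2), if k ≤ l then ff (n + 1) l k else 0) = TT (n + 1) l := by
    rw [Finset.sum_range_succ, if_neg (by omega), add_zero, TT]
    exact Finset.sum_congr rfl fun k hk => if_pos (by
      rw [Finset.mem_range] at hk; omega)
  have S3 : (∑ k ∈ Finset.range (l + 2), if k = 0 then 0 else
      (-1 : ℤ) ^ k * ((n + 2 - 2 * k).choose (l + 1 - k) : ℤ) *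
        ((n + 1 - k).choose (k - 1) : ℤ)) = - TT n l := by
    rw [Finset.sum_range_succ', if_pos rfl, add_zero, TT, ← Finset.sum_neg_distrib]
    refine Finset.sum_congr rfl fun i hi => ?_
    rw [if_neg (by omega)]
    rw [show n + 2 - 2 * (i + 1) = n - 2 * i by omega,
        show l + 1 - (i + 1) = l - i by omega,
        show n + 1 - (i + 1) = n - i by omega,
        show i + 1 - 1 = i by omega]
    simp only [ff, pow_succ]
    ring
  have hT : TT (n + 1) (l + 1) = ∑ k ∈ Finset.range (l + 2), ff (n + 1) (l + 1) k := by
    rw [TT, show l + 1 + 1 = l + 2 by ring]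
  rw [S2, S3, ← hT]
  ring

private lemma TT_one : ∀ n l : ℕ, l ≤ n → TT n l = 1 := by
  intro n
  induction n using Nat.strong_induction_on with
  | _ n ih =>
    intro l hl
    match l with
    | 0 => exact TT_zero n
    | (l' + 1) =>
      rcases eq_or_lt_of_le hl with h | h
      · rw [h]; exact TT_diag n
      · obtain ⟨n'', rfl⟩ : ∃ n'', n = n'' + 2 := ⟨n - 2, by omega⟩
        rw [TT_rec]
        rw [ih (n'' + 1) (by omega) (l' + 1) (by omega),
            ih (n'' + 1) (by omega) l' (by omega),
            ih n'' (by omega) l' (by omega)]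
        ring

/-- A binomial identity (Murahara–Onozuka–Seki, Lemma 6, first identity). -/
theorem stmt8 (l m : ℕ) :
    ∑ k ∈ Finset.range (l + 1),
        (-1 : ℤ) ^ k * ((2 * l + m - 2 * k).choose (l - k) : ℤ) *
          ((2 * l + m - k).choose k : ℤ) = 1 := by
  have := TT_one (2 * l + m) l (by omega)
  simpa [TT, ff] using this
end

section
/- For all non-negative integers l and m, the identity ∑_{k=0}^{l} 4^k · C(2l+m−2k, l−k) · C(2l+m, 2k) = C(4l+2m, 2l) holds, where C(n, k) denotes the binomial coefficient. -/
open Polynomial Finset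

lemma pairsum (f : ℕ → ℕ) (M : ℕ) :
    ∑ j ∈ Finset.range (2 * M), f j = ∑ k ∈ Finset.range M, (f (2 * k) + f (2 * k + 1)) := by
  induction M with
  | zero => simp
  | succ M ih =>
    rw [Finset.sum_range_succ, ← ih, Nat.mul_succ, Finset.sum_range_succ, Finset.sum_range_succ]
    ring

lemma coeffB (m t : ℕ) :
    (((1 : ℕ[X]) + X ^ 2) ^ m).coeff t = if 2 ∣ t then m.choose (t / 2) else 0 := by
  have h : ((1 : ℕ[X]) + X ^ 2) ^ m = Polynomial.expand ℕ 2 ((1 + X) ^ m) := by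
    rw [map_pow, map_add, map_one, expand_X]
  rw [h, Polynomial.coeff_expand (by norm_num)]
  simp [Polynomial.coeff_one_add_X_pow]

def gg (n l j : ℕ) : ℕ :=
  2 ^ j * n.choose j *
    (if j ≤ 2 * l then (if 2 ∣ (2 * l - j) then (n - j).choose ((2 * l - j) / 2) else 0) else 0)

lemma gg_odd (n l k : ℕ) : gg n l (2 * k + 1) = 0 := by
  unfold gg
  rcases le_or_gt (2 * k + 1) (2 * l) with h | h
  · rw [if_pos h, if_neg (by omega)]; simp
  · rw [if_neg (by omega)]; simp

lemma gg_even (n l k : ℕ) (hk : k ≤ l) :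
    gg n l (2 * k) = 4 ^ k * (n - 2 * k).choose (l - k) * n.choose (2 * k) := by
  unfold gg
  rw [if_pos (by omega), if_pos ⟨l - k, by omega⟩]
  have h1 : (2 * l - 2 * k) / 2 = l - k := by omega
  have h2 : (2 : ℕ) ^ (2 * k) = 4 ^ k := by rw [pow_mul]; norm_num
  rw [h1, h2]; ring

lemma gg_even_large (n l k : ℕ) (hk : l < k) : gg n l (2 * k) = 0 := by
  unfold gg; rw [if_neg (by omega)]; simp

lemma gg_large (n l j : ℕ) (hj : n < j) : gg n l j = 0 := by
  unfold gg; rw [Nat.choose_eq_zero_of_lt hj]; simp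

lemma keysum (n l : ℕ) :
    (2 * n).choose (2 * l)
      = ∑ k ∈ Finset.range (l + 1), 4 ^ k * (n - 2 * k).choose (l - k) * n.choose (2 * k) := by
  have key : ((1 : ℕ[X]) + X) ^ (2 * n)
      = ∑ j ∈ Finset.range (n + 1),
          (2 * X) ^ j * ((1 : ℕ[X]) + X ^ 2) ^ (n - j) * (n.choose j : ℕ[X]) := by
    rw [pow_mul, ← add_pow]
    congr 1
    ring
  have hc := congrArg (fun p => p.coeff (2 * l)) key
  simp only [Polynomial.coeff_one_add_X_pow, Polynomial.finset_sum_coeff] at hc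
  have hterm : ∀ j, ((2 * X : ℕ[X]) ^ j * ((1 : ℕ[X]) + X ^ 2) ^ (n - j)
      * (n.choose j : ℕ[X])).coeff (2 * l) = gg n l j := by
    intro j
    have h : ((2 * X : ℕ[X]) ^ j * ((1 : ℕ[X]) + X ^ 2) ^ (n - j) * (n.choose j : ℕ[X]))
        = Polynomial.C ((2 : ℕ) ^ j * n.choose j) * (((1 : ℕ[X]) + X ^ 2) ^ (n - j) * X ^ j) := by
      have hC : (Polynomial.C ((2 : ℕ) ^ j * n.choose j) : ℕ[X])
          = ((2 : ℕ[X]) ^ j * (n.choose j : ℕ[X])) := by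
        rw [map_mul, map_pow]; norm_num
      rw [hC]; ring
    rw [h, Polynomial.coeff_C_mul, Polynomial.coeff_mul_X_pow', coeffB]
    rfl
  simp only [hterm, Nat.cast_id] at hc
  rw [hc]
  have e1 : ∑ j ∈ Finset.range (n + 1), gg n l j = ∑ j ∈ Finset.range (2 * (n + l + 1)), gg n l j := by
    apply Finset.sum_subset
    · apply Finset.range_subset_range.2; omega
    · intro j _ hj2
      simp only [Finset.mem_range, not_lt] at hj2
      exact gg_large n l j (by omega)
  have e2 : ∑ j ∈ Finset.range (2 * (n + l + 1)), gg n l j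
      = ∑ k ∈ Finset.range (n + l + 1), gg n l (2 * k) := by
    rw [pairsum]
    apply Finset.sum_congr rfl
    intro k _
    rw [gg_odd, add_zero]
  have e3 : ∑ k ∈ Finset.range (n + l + 1), gg n l (2 * k)
      = ∑ k ∈ Finset.range (l + 1), gg n l (2 * k) := by
    symm
    apply Finset.sum_subset
    · apply Finset.range_subset_range.2; omega
    · intro k hk hk2
      apply gg_even_large
      simp only [Finset.mem_range] at hk2
      omega
  rw [e1, e2, e3]
  apply Finset.sum_congr rfl
  intro k hk
  rw [gg_even n l k (by simp only [Finset.mem_range] at hk; omega)]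

/-- A binomial identity (Murahara–Onozuka–Seki, Lemma 6, second identity). -/
theorem stmt9 (l m : ℕ) :
    ∑ k ∈ Finset.range (l + 1),
        4 ^ k * (2 * l + m - 2 * k).choose (l - k) * (2 * l + m).choose (2 * k)
      = (4 * l + 2 * m).choose (2 * l) := by
  have h := keysum (2 * l + m) l
  have h2 : 2 * (2 * l + m) = 4 * l + 2 * m := by ring
  rw [h2] at h
  simpa using h.symm
end

section
/- For all non-negative integers l and m, the identity ∑_{j=0}^{l} ((m+2j+1)/(l+m+j+1)) · C(4l+2m+1, 2l−2j) = C(4l+2m, 2l) holds in the rational numbers, where C(n, k) denotes the binomial coefficient. -/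
lemma aux10 (d j m : ℕ) :
    ((m : ℚ) + 2 * j + 1) / (((j + d + 1 : ℕ) : ℚ) + m + j + 1) *
        ((4 * (j + d + 1) + 2 * m + 1).choose (2 * d + 2) : ℚ)
      = ((4 * (j + d + 1) + 2 * m).choose (2 * d + 2) : ℚ)
        - ((4 * (j + d + 1) + 2 * m).choose (2 * d) : ℚ) := by
  set N : ℕ := 4 * (j + d + 1) + 2 * m with hN
  have hP : 4 * (j + d + 1) + 2 * m + 1 = N + 1 := rfl
  have pascal : (N + 1).choose (2 * d + 2) = N.choose (2 * d + 1) + N.choose (2 * d + 2) :=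
    Nat.choose_succ_succ N (2 * d + 1)
  have e1 : N.choose (2 * d + 1 + 1) * (2 * d + 1 + 1) = N.choose (2 * d + 1) * (N - (2 * d + 1)) :=
    Nat.choose_succ_right_eq N (2 * d + 1)
  have e2 : N.choose (2 * d + 1) * (2 * d + 1) = N.choose (2 * d) * (N - 2 * d) :=
    Nat.choose_succ_right_eq N (2 * d)
  have h1 : N - (2 * d + 1) = 4 * j + 2 * d + 2 * m + 3 := by omega
  have h2 : N - 2 * d = 4 * j + 2 * d + 2 * m + 4 := by omega
  rw [h1] at e1
  rw [h2] at e2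
  have e1' : (N.choose (2 * d + 2) : ℚ) * (2 * d + 2)
      = (N.choose (2 * d + 1) : ℚ) * (4 * j + 2 * d + 2 * m + 3) := by
    exact_mod_cast congrArg (Nat.cast : ℕ → ℚ) e1
  have e2' : (N.choose (2 * d + 1) : ℚ) * (2 * d + 1)
      = (N.choose (2 * d) : ℚ) * (4 * j + 2 * d + 2 * m + 4) := by
    exact_mod_cast congrArg (Nat.cast : ℕ → ℚ) e2
  have hden : (((j + d + 1 : ℕ) : ℚ) + m + j + 1) ≠ 0 := by
    push_cast; positivity
  rw [hP, pascal, div_mul_eq_mul_div, div_eq_iff hden]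
  push_cast
  ring_nf
  ring_nf at e1' e2'
  linear_combination (-1/2 : ℚ) * e1' + (-1/2 : ℚ) * e2'

/-- A binomial identity used in the proof of Lemma 5 of Murahara–Onozuka–Seki. -/
theorem stmt10 (l m : ℕ) :
    ∑ j ∈ Finset.range (l + 1),
        ((m : ℚ) + 2 * j + 1) / ((l : ℚ) + m + j + 1) *
          ((4 * l + 2 * m + 1).choose (2 * l - 2 * j) : ℚ)
      = ((4 * l + 2 * m).choose (2 * l) : ℚ) := by
  set f : ℕ → ℚ := fun j => if j ≤ l then ((4 * l + 2 * m).choose (2 * l - 2 * j) : ℚ) else 0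
    with hf
  have key : ∀ j ∈ Finset.range (l + 1),
      ((m : ℚ) + 2 * j + 1) / ((l : ℚ) + m + j + 1) *
          ((4 * l + 2 * m + 1).choose (2 * l - 2 * j) : ℚ) = f j - f (j + 1) := by
    intro j hj
    simp only [Finset.mem_range] at hj
    have hjl : j ≤ l := by omega
    rcases eq_or_lt_of_le hjl with h | h
    · subst h
      simp only [hf, le_refl, if_pos, Nat.sub_self, Nat.lt_irrefl]
      rw [if_neg (by omega)]
      simp only [Nat.choose_zero_right, Nat.cast_one, mul_one, sub_zero]
      rw [div_eq_one_iff_eq (by positivity)]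
      ring
    · obtain ⟨d, hd⟩ : ∃ d, l = j + d + 1 := ⟨l - j - 1, by omega⟩
      subst hd
      have h1 : 2 * (j + d + 1) - 2 * j = 2 * d + 2 := by omega
      have h2 : 2 * (j + d + 1) - 2 * (j + 1) = 2 * d := by omega
      simp only [hf, if_pos (by omega : j ≤ j + d + 1), if_pos (by omega : j + 1 ≤ j + d + 1),
        h1, h2]
      exact aux10 d j m
  rw [Finset.sum_congr rfl key, Finset.sum_range_sub']
  simp only [hf, if_pos (Nat.zero_le l), if_neg (by omega : ¬ l + 1 ≤ l), sub_zero]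
  norm_num
end

section
/- Let 𝒌 = (k₁,…,k_r) and 𝒍 = (l₁,…,l_s) be indices of positive integers. Then for all but finitely many primes p, the following congruence of rational numbers holds modulo p²: Z_p(𝒌 ш 𝒍) ≡ (−1)^{l₁+⋯+l_s} · [ Z_p(k₁,…,k_r, l_s, l_{s−1}, …, l₁) + p · ∑_{i=1}^{s} l_i · Z_p(k₁,…,k_r, l_s, …, l_{i+1}, l_i + 1, l_{i−1}, …, l₁) ] (mod p²), where Z_p is extended ℚ-linearly from indices to the ℚ-vector space ℜ spanned by indices. -/
/-- `ZAux N ks a = ∑_{a ≤ n₁ < ⋯ < n_r ≤ N} ∏ᵢ 1/nᵢ^{kᵢ}` for `ks = (k₁,…,k_r)`. -/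
def ZAux (N : ℕ) : List ℕ → ℕ → ℚ
  | [], _ => 1
  | k :: ks, a => ∑ n ∈ Finset.Icc a N, ((n : ℚ) ^ k)⁻¹ * ZAux N ks (n + 1)

/-- Truncated multiple zeta value `Z_p(k₁,…,k_r) = ∑_{1 ≤ n₁ < ⋯ < n_r ≤ p-1} 1/(n₁^{k₁}⋯n_r^{k_r})`. -/
def Z (p : ℕ) (ks : List ℕ) : ℚ := ZAux (p - 1) ks 1

/-- `ZsAux N ks a = ∑_{a ≤ n₁ ≤ ⋯ ≤ n_r ≤ N} ∏ᵢ 1/nᵢ^{kᵢ}`. -/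
def ZsAux (N : ℕ) : List ℕ → ℕ → ℚ
  | [], _ => 1
  | k :: ks, a => ∑ n ∈ Finset.Icc a N, ((n : ℚ) ^ k)⁻¹ * ZsAux N ks n

/-- Truncated multiple zeta-star value. -/
def Zstar (p : ℕ) (ks : List ℕ) : ℚ := ZsAux (p - 1) ks 1

/-- `α ≡ β (mod p^e)` for rationals: the `p`-adic valuation of `α - β` is at least `e`,
expressed via the `p`-adic norm. -/
def congrMod (p e : ℕ) (α β : ℚ) : Prop := padicNorm p (α - β) ≤ (p : ℚ) ^ (-(e : ℤ))

/-- `gapIndex a b c [m₀, m₁, …, m_{2l}]` is the index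
`{c}^{m₀}, a, {c}^{m₁}, b, {c}^{m₂}, …, a, {c}^{m_{2l-1}}, b, {c}^{m_{2l}}`. -/
def gapIndex (a b c : ℕ) : List ℕ → List ℕ
  | [] => []
  | [m0] => List.replicate m0 c
  | m0 :: m1 :: rest =>
      List.replicate m0 c ++ a :: (List.replicate m1 c ++ b :: gapIndex a b c rest)

/-- The multiset of all interleavings (shuffles) of two lists, with multiplicity. -/
def shuffles {α : Type*} : List α → List α → Multiset (List α)
  | [], ys => {ys}
  | x :: xs, [] => {x :: xs}
  | x :: xs, y :: ys =>
      (shuffles xs (y :: ys)).map (x :: ·) + (shuffles (x :: xs) ys).map (y :: ·)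
termination_by xs ys => xs.length + ys.length

/-- The product `⧢` of two indices, as an element of the ℚ-vector space `ℜ = (List ℕ →₀ ℚ)`
spanned by all indices: the formal sum of all interleavings of the two index sequences. -/
noncomputable def shT (k l : List ℕ) : List ℕ →₀ ℚ :=
  ((shuffles k l).map fun w => Finsupp.single w (1 : ℚ)).sum

/-- The word `x^{k_r-1} y x^{k_{r-1}-1} y ⋯ x^{k₁-1} y` over `{x, y}` (`false` = `x`,
`true` = `y`) associated to the index `(k₁, …, k_r)`. -/
def toWord (ks : List ℕ) : List Bool :=
  (ks.reverse.map fun k => List.replicate (k - 1) false ++ [true]).flatten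

def fromWordAux : List Bool → ℕ → List ℕ
  | [], _ => []
  | false :: w, c => fromWordAux w (c + 1)
  | true :: w, c => (c + 1) :: fromWordAux w 0

/-- The index associated to a word over `{x, y}` ending in `y`
(inverse of `toWord` on such words). -/
def fromWord (w : List Bool) : List ℕ := (fromWordAux w 0).reverse

/-- The shuffle product `ш` of two indices, as an element of `ℜ = (List ℕ →₀ ℚ)`: the words of
the two indices are shuffled and each resulting word is converted back to an index. -/
noncomputable def shW (k l : List ℕ) : List ℕ →₀ ℚ :=
  ((shuffles (toWord k) (toWord l)).map fun w => Finsupp.single (fromWord w) (1 : ℚ)).sum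

/-- The index `{1,3}^l = (1,3,1,3,…,1,3)`. -/
def rep13 (l : ℕ) : List ℕ := (List.replicate l ([1, 3] : List ℕ)).flatten


/-- `Z_p` extended ℚ-linearly to the ℚ-vector space `ℜ = (List ℕ →₀ ℚ)` spanned by indices. -/
def ZR (p : ℕ) (v : List ℕ →₀ ℚ) : ℚ := v.sum fun ks q => q * Z p ks


namespace Stmt13Aux
open Finset

/-- Taylor coefficient at `z^n` of the multiple polylog attached to word `w`. -/
def c : List Bool → ℕ → ℚ
  | [], n => if n = 0 then 1 else 0
  | false :: w, n => c w n / n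
  | true :: w, n => (∑ m ∈ Finset.range n, c w m) / n

@[simp] lemma c_nil (n : ℕ) : c [] n = if n = 0 then 1 else 0 := rfl
lemma c_false (w : List Bool) (n : ℕ) : c (false :: w) n = c w n / n := rfl
lemma c_true (w : List Bool) (n : ℕ) :
    c (true :: w) n = (∑ m ∈ Finset.range n, c w m) / n := rfl

@[simp] lemma c_cons_zero (b : Bool) (w : List Bool) : c (b :: w) 0 = 0 := by
  cases b <;> simp [c_false, c_true]

/-- "Ends in `true` (or empty)". -/
def ET (w : List Bool) : Prop := w = [] ∨ w.getLast? = some true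

lemma ET_nil : ET ([] : List Bool) := Or.inl rfl

lemma ET_tail {b : Bool} {w : List Bool} (h : ET (b :: w)) : ET w := by
  cases w with
  | nil => exact Or.inl rfl
  | cons c w' =>
    rcases h with h | h
    · exact absurd h (by simp)
    · exact Or.inr (by rwa [List.getLast?_cons_cons] at h)

lemma ET_cons_of_ne {b : Bool} {w : List Bool} (hw : w ≠ []) (h : ET w) : ET (b :: w) := by
  rcases h with rfl | h
  · exact absurd rfl hw
  · cases w with
    | nil => exact absurd rfl hw
    | cons c w' => exact Or.inr (by rwa [List.getLast?_cons_cons])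

lemma ET_false_ne_nil {w : List Bool} (h : ET (false :: w)) : w ≠ [] := by
  rintro rfl
  rcases h with h | h <;> simp at h

lemma c_zero_of_ET_ne {w : List Bool} (hw : w ≠ []) : c w 0 = 0 := by
  cases w with
  | nil => exact absurd rfl hw
  | cons b w' => simp

/-- `fromWordAux` with shifted counter. -/
lemma fwa_shift (w : List Bool) : ∀ d : ℕ,
    fromWordAux w d = (fromWordAux w 0).modifyHead (· + d) := by
  induction w with
  | nil => intro d; simp [fromWordAux]
  | cons b w' ih =>
    intro d
    cases b with
    | false =>
      show fromWordAux w' (d + 1) = (fromWordAux w' 1).modifyHead (· + d)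
      rw [ih (d + 1), ih 1]
      cases fromWordAux w' 0 with
      | nil => simp
      | cons t r => simp [List.modifyHead]; omega
    | true => simp [fromWordAux, List.modifyHead]; omega

lemma fwa_replicate (j : ℕ) (w : List Bool) (d : ℕ) :
    fromWordAux (List.replicate j false ++ w) d = fromWordAux w (d + j) := by
  induction j generalizing d with
  | zero => simp
  | succ j ih =>
    rw [List.replicate_succ, List.cons_append]
    show fromWordAux (List.replicate j false ++ w) (d + 1) = _
    rw [ih (d + 1)]
    congr 1
    omega

lemma fwa_flatten (M : List ℕ) (hM : ∀ x ∈ M, 0 < x) :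
    fromWordAux ((M.map fun k => List.replicate (k - 1) false ++ [true]).flatten) 0 = M := by
  induction M with
  | nil => rfl
  | cons k M' ih =>
    have hk : 0 < k := hM k (by simp)
    rw [List.map_cons, List.flatten_cons, List.append_assoc, fwa_replicate]
    show (0 + (k - 1) + 1) :: fromWordAux _ 0 = _
    simp only [List.append_eq, List.nil_append]
    rw [ih (fun x hx => hM x (by simp [hx]))]
    congr 1
    omega

lemma fromWord_toWord (K : List ℕ) (hK : ∀ x ∈ K, 0 < x) : fromWord (toWord K) = K := by
  unfold fromWord toWord
  rw [fwa_flatten _ (fun x hx => hK x (List.mem_reverse.1 hx)), List.reverse_reverse]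

lemma ET_flatten_aux (M' : List ℕ) : ∀ k : ℕ,
    (((k :: M').map fun k => List.replicate (k - 1) false ++ [true]).flatten).getLast?
      = some true := by
  induction M' with
  | nil => intro k; simp
  | cons k' M'' ih2 =>
    intro k
    rw [List.map_cons, List.flatten_cons, List.getLast?_append, ih2 k']
    rfl

lemma ET_toWord (K : List ℕ) : ET (toWord K) := by
  unfold toWord
  cases hr : K.reverse with
  | nil => exact Or.inl (by simp)
  | cons k M' => exact Or.inr (ET_flatten_aux M' k)

end Stmt13Aux

namespace Stmt13Aux
open Finset

lemma shuffles_nil_left {α : Type*} (v : List α) : shuffles [] v = {v} := by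
  rw [shuffles]

lemma shuffles_nil_right {α : Type*} (u : List α) (h : u ≠ []) : shuffles u [] = {u} := by
  cases u with
  | nil => exact absurd rfl h
  | cons x xs => rw [shuffles]

lemma shuffles_cons_cons {α : Type*} (x y : α) (xs ys : List α) :
    shuffles (x :: xs) (y :: ys) =
      (shuffles xs (y :: ys)).map (x :: ·) + (shuffles (x :: xs) ys).map (y :: ·) := by
  rw [shuffles]

lemma length_of_mem_shuffles {α : Type*} :
    ∀ (u v w : List α), w ∈ shuffles u v → w.length = u.length + v.length := by
  intro u v
  induction u, v using shuffles.induct with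
  | case1 ys => intro w hw; rw [shuffles_nil_left] at hw; simp_all
  | case2 x xs => intro w hw; rw [shuffles_nil_right _ (by simp)] at hw; simp_all
  | case3 x xs y ys ih1 ih2 =>
    intro w hw
    rw [shuffles_cons_cons] at hw
    rcases Multiset.mem_add.1 hw with hw | hw <;>
      obtain ⟨w', hw', rfl⟩ := Multiset.mem_map.1 hw
    · have := ih1 w' hw'; simp_all; omega
    · have := ih2 w' hw'; simp_all; omega

lemma ET_of_mem_shuffles :
    ∀ (u v w : List Bool), ET u → ET v → w ∈ shuffles u v → ET w := by
  intro u v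
  induction u, v using shuffles.induct with
  | case1 ys => intro w _ hv hw; rw [shuffles_nil_left] at hw; simp_all
    
  | case2 x xs => intro w hu _ hw; rw [shuffles_nil_right _ (by simp)] at hw; simp_all
  | case3 x xs y ys ih1 ih2 =>
    intro w hu hv hw
    rw [shuffles_cons_cons] at hw
    rcases Multiset.mem_add.1 hw with hw | hw <;>
      obtain ⟨w', hw', rfl⟩ := Multiset.mem_map.1 hw
    · have hET : ET w' := ih1 w' (ET_tail hu) hv hw'
      have hlen := length_of_mem_shuffles _ _ _ hw'
      exact ET_cons_of_ne (by intro h; rw [h] at hlen; simp at hlen) hET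
    · have hET : ET w' := ih2 w' hu (ET_tail hv) hw'
      have hlen := length_of_mem_shuffles _ _ _ hw'
      exact ET_cons_of_ne (by intro h; rw [h] at hlen; simp at hlen; omega) hET

lemma multiset_sum_map_sum {α : Type*} (S : Multiset α) (t : Finset ℕ) (f : α → ℕ → ℚ) :
    (S.map fun w => ∑ m ∈ t, f w m).sum = ∑ m ∈ t, (S.map fun w => f w m).sum := by
  induction S using Multiset.induction_on with
  | empty => simp
  | cons a s ih => simp [ih, Finset.sum_add_distrib]

@[simp] lemma ZAux_nil (N a : ℕ) : ZAux N [] a = 1 := rfl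

lemma ZAux_cons (N k a : ℕ) (ks : List ℕ) :
    ZAux N (k :: ks) a = ∑ n ∈ Finset.Icc a N, ((n : ℚ) ^ k)⁻¹ * ZAux N ks (n + 1) := rfl

lemma ZAux_append (N t : ℕ) (ms : List ℕ) :
    ∀ (ks : List ℕ) (a : ℕ), 1 ≤ a →
    ZAux N (ks ++ t :: ms) a
      = ∑ v ∈ Finset.Icc a N, ((v : ℚ) ^ t)⁻¹ * ZAux (v - 1) ks a * ZAux N ms (v + 1) := by
  intro ks
  induction ks with
  | nil => intro a _; simp [ZAux_cons]
  | cons k ks ih =>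
    intro a ha
    rw [List.cons_append, ZAux_cons]
    have step : ∀ n ∈ Finset.Icc a N,
        ((n : ℚ) ^ k)⁻¹ * ZAux N (ks ++ t :: ms) (n + 1)
          = ∑ v ∈ Finset.Icc (n + 1) N,
              ((n : ℚ) ^ k)⁻¹ *
                (((v : ℚ) ^ t)⁻¹ * ZAux (v - 1) ks (n + 1) * ZAux N ms (v + 1)) := by
      intro n _
      rw [ih (n + 1) (by omega), Finset.mul_sum]
    rw [Finset.sum_congr rfl step]
    rw [Finset.sum_comm' (s := Finset.Icc a N) (t := fun n => Finset.Icc (n+1) N)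
      (s' := fun v => Finset.Icc a (v-1)) (t' := Finset.Icc a N)
      (by intro n v; simp only [Finset.mem_Icc]; omega)]
    refine Finset.sum_congr rfl fun v hv => ?_
    simp only [ZAux_cons, Finset.mul_sum, Finset.sum_mul]
    exact Finset.sum_congr rfl fun n hn => by ring

end Stmt13Aux

namespace Stmt13Aux
open Finset

lemma range_succ_eq_insert (N : ℕ) : Finset.range (N + 1) = insert 0 (Finset.Icc 1 N) := by
  ext x
  simp only [Finset.mem_range, Finset.mem_insert, Finset.mem_Icc]
  omega

def Dstmt (w : List Bool) : Prop :=
  w = [] ∨ ∃ t ks, 1 ≤ t ∧ fromWordAux w 0 = t :: ks ∧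
    ∀ v : ℕ, c w v = ((v : ℚ) ^ t)⁻¹ * ZAux (v - 1) ks.reverse 1

lemma B_of_D {w : List Bool} (hD : Dstmt w) (N : ℕ) :
    ∑ m ∈ Finset.range (N + 1), c w m = ZAux N (fromWord w) 1 := by
  rcases hD with rfl | ⟨t, ks, ht, hfw, hf⟩
  · show _ = ZAux N (fromWordAux [] 0).reverse 1
    simp [fromWordAux]
  · have hw : fromWord w = ks.reverse ++ [t] := by
      unfold fromWord; rw [hfw, List.reverse_cons]
    have happ := ZAux_append N t [] ks.reverse 1 le_rfl
    rw [hw, show (ks.reverse ++ [t] : List ℕ) = ks.reverse ++ t :: [] from rfl, happ]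
    rw [range_succ_eq_insert, Finset.sum_insert (by simp)]
    rw [hf 0]
    have h0 : ((0 : ℕ) : ℚ) ^ t = 0 := by
      rw [Nat.cast_zero, zero_pow (by omega)]
    rw [h0, inv_zero, zero_mul, zero_add]
    exact Finset.sum_congr rfl fun v hv => by rw [hf v]; simp

lemma D_all : ∀ (n : ℕ) (w : List Bool), w.length ≤ n → ET w → Dstmt w := by
  intro n
  induction n with
  | zero =>
    intro w hw _
    left
    cases w with
    | nil => rfl
    | cons b w' => simp at hw
  | succ n ih =>
    intro w hlen hET
    cases w with
    | nil => left; rfl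
    | cons b w' =>
      have hlen' : w'.length ≤ n := by simp at hlen; omega
      have hET' : ET w' := ET_tail hET
      cases b with
      | true =>
        right
        refine ⟨1, fromWordAux w' 0, le_rfl, rfl, fun v => ?_⟩
        cases v with
        | zero => simp [c_true]
        | succ v =>
          rw [c_true]
          have hB := B_of_D (ih w' hlen' hET') v
          unfold fromWord at hB
          rw [hB]
          rw [Nat.succ_sub_one, pow_one, div_eq_inv_mul]
      | false =>
        have hne : w' ≠ [] := ET_false_ne_nil hET
        rcases ih w' hlen' hET' with rfl | ⟨t, ks, ht, hfw, hf⟩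
        · exact absurd rfl hne
        right
        refine ⟨t + 1, ks, by omega, ?_, fun v => ?_⟩
        · show fromWordAux w' 1 = (t + 1) :: ks
          rw [fwa_shift w' 1, hfw]
          simp [List.modifyHead]
        · rw [c_false, hf v, pow_succ, mul_inv, div_eq_mul_inv]
          ring

lemma D_of_ET {w : List Bool} (h : ET w) : Dstmt w := D_all w.length w le_rfl h

lemma B_of_ET {w : List Bool} (h : ET w) (N : ℕ) :
    ∑ m ∈ Finset.range (N + 1), c w m = ZAux N (fromWord w) 1 :=
  B_of_D (D_of_ET h) N

lemma ZAux_split {w : List Bool} (hw : ET w) (ms : List ℕ) (N : ℕ) :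
    ZAux N (fromWord w ++ ms) 1
      = ∑ v ∈ Finset.range (N + 1), c w v * ZAux N ms (v + 1) := by
  rcases D_of_ET hw with rfl | ⟨t, ks, ht, hfw, hf⟩
  · show ZAux N (([] : List ℕ) ++ ms) 1 = _
    rw [List.nil_append]
    rw [Finset.sum_congr rfl (fun v _ => by rw [c_nil, ite_mul, one_mul, zero_mul])]
    rw [Finset.sum_ite_eq' (Finset.range (N + 1)) 0 (fun v => ZAux N ms (v + 1))]
    simp
  · have hw2 : fromWord w = ks.reverse ++ [t] := by
      unfold fromWord; rw [hfw, List.reverse_cons]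
    rw [hw2, List.append_assoc, List.singleton_append,
      ZAux_append N t ms ks.reverse 1 le_rfl]
    rw [range_succ_eq_insert, Finset.sum_insert (by simp)]
    rw [hf 0]
    have h0 : ((0 : ℕ) : ℚ) ^ t = 0 := by
      rw [Nat.cast_zero, zero_pow (by omega)]
    rw [h0, inv_zero, zero_mul, zero_mul, zero_add]
    exact Finset.sum_congr rfl fun v hv => by rw [hf v]

end Stmt13Aux

namespace Stmt13Aux
open Finset

lemma mul_c_false (w : List Bool) {N : ℕ} (hN : N ≠ 0) :
    (N : ℚ) * c (false :: w) N = c w N := by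
  have h : ((N : ℚ)) ≠ 0 := Nat.cast_ne_zero.mpr hN
  rw [c_false, mul_comm, div_mul_cancel₀ _ h]

lemma mul_c_true (w : List Bool) {N : ℕ} (hN : N ≠ 0) :
    (N : ℚ) * c (true :: w) N = ∑ m ∈ Finset.range N, c w m := by
  have h : ((N : ℚ)) ≠ 0 := Nat.cast_ne_zero.mpr hN
  rw [c_true, mul_comm, div_mul_cancel₀ _ h]

lemma weight_c_false {w : List Bool} (hw : w ≠ []) (a : ℕ) :
    (a : ℚ) * c (false :: w) a = c w a := by
  cases a with
  | zero => simp [c_zero_of_ET_ne hw]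
  | succ a => exact mul_c_false w (Nat.succ_ne_zero a)

lemma weight_c_true (w : List Bool) (a : ℕ) :
    (a : ℚ) * c (true :: w) a = ∑ m ∈ Finset.range a, c w m := by
  cases a with
  | zero => simp
  | succ a => exact mul_c_true w (Nat.succ_ne_zero a)

lemma conv_aux (N : ℕ) (f g : ℕ → ℚ) :
    ∑ a ∈ Finset.range (N + 1), (∑ m ∈ Finset.range a, f m) * g (N - a)
      = ∑ m ∈ Finset.range N, ∑ j ∈ Finset.range (m + 1), f j * g (m - j) := by
  rw [Finset.sum_congr rfl
    (fun a _ => Finset.sum_mul (Finset.range a) f (g (N - a)))]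
  rw [Finset.sum_sigma' (Finset.range (N + 1)) (fun a => Finset.range a)
    (fun x y => f y * g (N - x))]
  rw [Finset.sum_sigma' (Finset.range N) (fun m => Finset.range (m + 1))
    (fun x y => f y * g (x - y))]
  refine Finset.sum_nbij' (fun x => ⟨x.2 + (N - x.1), x.2⟩) (fun y => ⟨N - (y.1 - y.2), y.2⟩)
    ?_ ?_ ?_ ?_ ?_
  · rintro ⟨a, m⟩ h
    simp only [Finset.mem_sigma, Finset.mem_range] at h
    dsimp only
    simp only [Finset.mem_sigma, Finset.mem_range]
    omega
  · rintro ⟨mr, j⟩ h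
    simp only [Finset.mem_sigma, Finset.mem_range] at h
    dsimp only
    simp only [Finset.mem_sigma, Finset.mem_range]
    omega
  · rintro ⟨a, m⟩ h
    simp only [Finset.mem_sigma, Finset.mem_range] at h
    dsimp only
    simp only [Sigma.mk.inj_iff, heq_eq_eq, and_true, true_and]
    omega
  · rintro ⟨mr, j⟩ h
    simp only [Finset.mem_sigma, Finset.mem_range] at h
    dsimp only
    simp only [Sigma.mk.inj_iff, heq_eq_eq, and_true, true_and]
    omega
  · rintro ⟨a, m⟩ h
    simp only [Finset.mem_sigma, Finset.mem_range] at h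
    have : m + (N - a) - m = N - a := by omega
    rw [this]

lemma conv_aux2 (N : ℕ) (f g : ℕ → ℚ) :
    ∑ a ∈ Finset.range (N + 1), f a * (∑ m ∈ Finset.range (N - a), g m)
      = ∑ m ∈ Finset.range N, ∑ j ∈ Finset.range (m + 1), f j * g (m - j) := by
  rw [Finset.sum_congr rfl
    (fun a _ => Finset.mul_sum (Finset.range (N - a)) g (f a))]
  rw [Finset.sum_sigma' (Finset.range (N + 1)) (fun a => Finset.range (N - a))
    (fun x y => f x * g y)]
  rw [Finset.sum_sigma' (Finset.range N) (fun m => Finset.range (m + 1))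
    (fun x y => f y * g (x - y))]
  refine Finset.sum_nbij' (fun x => ⟨x.1 + x.2, x.1⟩) (fun y => ⟨y.2, y.1 - y.2⟩)
    ?_ ?_ ?_ ?_ ?_
  · rintro ⟨a, m⟩ h
    simp only [Finset.mem_sigma, Finset.mem_range] at h
    dsimp only
    simp only [Finset.mem_sigma, Finset.mem_range]
    omega
  · rintro ⟨mr, j⟩ h
    simp only [Finset.mem_sigma, Finset.mem_range] at h
    dsimp only
    simp only [Finset.mem_sigma, Finset.mem_range]
    omega
  · rintro ⟨a, m⟩ h
    simp only [Finset.mem_sigma, Finset.mem_range] at h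
    dsimp only
    simp only [Sigma.mk.inj_iff, heq_eq_eq, and_true, true_and]
    omega
  · rintro ⟨mr, j⟩ h
    simp only [Finset.mem_sigma, Finset.mem_range] at h
    dsimp only
    simp only [Sigma.mk.inj_iff, heq_eq_eq, and_true, true_and]
    omega
  · rintro ⟨a, m⟩ h
    simp only [Finset.mem_sigma, Finset.mem_range] at h
    have : a + m - a = m := by omega
    rw [this]

lemma c_shuffle :
    ∀ (u v : List Bool), ET u → ET v → ∀ N : ℕ,
      ((shuffles u v).map fun w => c w N).sum
        = ∑ a ∈ Finset.range (N + 1), c u a * c v (N - a) := by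
  intro u v
  induction u, v using shuffles.induct with
  | case1 ys =>
    intro _ _ N
    rw [shuffles_nil_left]
    simp only [Multiset.map_singleton, Multiset.sum_singleton]
    rw [Finset.sum_congr rfl (fun a _ => by rw [c_nil, ite_mul, one_mul, zero_mul]),
      Finset.sum_ite_eq' (Finset.range (N + 1)) 0 (fun a => c ys (N - a))]
    simp
  | case2 x xs =>
    intro _ _ N
    rw [shuffles_nil_right _ (by simp)]
    simp only [Multiset.map_singleton, Multiset.sum_singleton]
    have : ∀ a ∈ Finset.range (N + 1), c (x :: xs) a * c [] (N - a)
        = if a = N then c (x :: xs) a else 0 := by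
      intro a ha
      simp only [Finset.mem_range] at ha
      rw [c_nil]
      by_cases h : a = N
      · simp [h]
      · have : ¬(N - a = 0) := by omega
        simp [h, this]
    rw [Finset.sum_congr rfl this, Finset.sum_ite_eq' (Finset.range (N + 1)) N
      (fun a => c (x :: xs) a)]
    simp
  | case3 x xs y ys ih1 ih2 =>
    intro hu hv N
    have hETxs : ET xs := ET_tail hu
    have hETys : ET ys := ET_tail hv
    rw [shuffles_cons_cons, Multiset.map_add, Multiset.sum_add, Multiset.map_map,
      Multiset.map_map]
    simp only [Function.comp]
    cases N with
    | zero => simp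
    | succ M =>
      set N := M + 1 with hN
      have hNne : (N : ℕ) ≠ 0 := Nat.succ_ne_zero M
      have hNQ : ((N : ℕ) : ℚ) ≠ 0 := Nat.cast_ne_zero.mpr hNne
      apply mul_left_cancel₀ hNQ
      rw [mul_add, ← Multiset.sum_map_mul_left, ← Multiset.sum_map_mul_left]
      -- RHS: N * sum = sum of (a + (N-a)) * term
      have hRHS : (N : ℚ) * ∑ a ∈ Finset.range (N + 1), c (x :: xs) a * c (y :: ys) (N - a)
          = (∑ a ∈ Finset.range (N + 1), ((a : ℚ) * c (x :: xs) a) * c (y :: ys) (N - a))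
            + ∑ a ∈ Finset.range (N + 1),
                c (x :: xs) a * (((N - a : ℕ) : ℚ) * c (y :: ys) (N - a)) := by
        rw [Finset.mul_sum, ← Finset.sum_add_distrib]
        refine Finset.sum_congr rfl fun a ha => ?_
        simp only [Finset.mem_range] at ha
        have : ((N : ℕ) : ℚ) = (a : ℚ) + ((N - a : ℕ) : ℚ) := by
          push_cast [Nat.cast_sub (by omega : a ≤ N)]
          ring
        rw [this]
        ring
      rw [hRHS]
      congr 1
      -- first halves
      · cases x with
        | false =>
          have hxs : xs ≠ [] := ET_false_ne_nil hu
          rw [Multiset.map_congr rfl (fun w _ => mul_c_false w hNne)]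
          rw [ih1 hETxs hv N]
          exact (Finset.sum_congr rfl fun a ha => by
            rw [weight_c_false hxs a]).symm
        | true =>
          rw [Multiset.map_congr rfl (fun w _ => mul_c_true w hNne)]
          rw [multiset_sum_map_sum]
          have h1 : ∀ m ∈ Finset.range N,
              ((shuffles xs (y :: ys)).map fun w => c w m).sum
                = ∑ a ∈ Finset.range (m + 1), c xs a * c (y :: ys) (m - a) :=
            fun m _ => ih1 hETxs hv m
          rw [Finset.sum_congr rfl h1]
          have h2 : ∀ a ∈ Finset.range (N + 1),
              (a : ℚ) * c (true :: xs) a * c (y :: ys) (N - a)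
                = (∑ m ∈ Finset.range a, c xs m) * c (y :: ys) (N - a) :=
            fun a _ => by rw [weight_c_true xs a]
          rw [Finset.sum_congr rfl h2]
          exact (conv_aux N (fun m => c xs m) (fun b => c (y :: ys) b)).symm
      -- second halves
      · cases y with
        | false =>
          have hys : ys ≠ [] := ET_false_ne_nil hv
          rw [Multiset.map_congr rfl (fun w _ => mul_c_false w hNne)]
          rw [ih2 hu hETys N]
          exact (Finset.sum_congr rfl fun a ha => by
            rw [weight_c_false hys (N - a)]).symm
        | true =>
          rw [Multiset.map_congr rfl (fun w _ => mul_c_true w hNne)]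
          rw [multiset_sum_map_sum]
          have h1 : ∀ m ∈ Finset.range N,
              ((shuffles (x :: xs) ys).map fun w => c w m).sum
                = ∑ a ∈ Finset.range (m + 1), c (x :: xs) a * c ys (m - a) :=
            fun m _ => ih2 hu hETys m
          rw [Finset.sum_congr rfl h1]
          have h2 : ∀ a ∈ Finset.range (N + 1),
              c (x :: xs) a * (((N - a : ℕ) : ℚ) * c (true :: ys) (N - a))
                = c (x :: xs) a * ∑ m ∈ Finset.range (N - a), c ys m :=
            fun a _ => by rw [weight_c_true ys (N - a)]
          rw [Finset.sum_congr rfl h2]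
          exact (conv_aux2 N (fun a => c (x :: xs) a) (fun m => c ys m)).symm

end Stmt13Aux

namespace Stmt13Aux
open Finset

/-- Sums `∑_{b ≤ m₁ < ⋯ < m_s ≤ M} ∏ 1/(P - mᵢ)^{lᵢ}`. -/
def RAux (P M : ℕ) : List ℕ → ℕ → ℚ
  | [], _ => 1
  | l :: ls, b => ∑ m ∈ Finset.Icc b M, (((P : ℚ) - (m : ℚ)) ^ l)⁻¹ * RAux P M ls (m + 1)

@[simp] lemma RAux_nil (P M b : ℕ) : RAux P M [] b = 1 := rfl

lemma RAux_cons (P M l b : ℕ) (ls : List ℕ) :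
    RAux P M (l :: ls) b
      = ∑ m ∈ Finset.Icc b M, (((P : ℚ) - (m : ℚ)) ^ l)⁻¹ * RAux P M ls (m + 1) := rfl

lemma ZAux_reflect (N : ℕ) : ∀ (ls : List ℕ) (a b : ℕ), a ≤ b → b ≤ N →
    ZAux b ls.reverse (a + 1) = RAux (N + 1) (N - a) ls (N + 1 - b) := by
  intro ls
  induction ls with
  | nil => intro a b _ _; simp
  | cons l ls ih =>
    intro a b hab hbN
    rw [List.reverse_cons, show (ls.reverse ++ [l] : List ℕ) = ls.reverse ++ l :: [] from rfl,
      ZAux_append b l [] ls.reverse (a + 1) (by omega), RAux_cons]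
    refine Finset.sum_nbij' (fun v => N + 1 - v) (fun m => N + 1 - m) ?_ ?_ ?_ ?_ ?_
    · intro v hv; simp only [Finset.mem_Icc] at hv ⊢; omega
    · intro m hm; simp only [Finset.mem_Icc] at hm ⊢; omega
    · intro v hv; simp only [Finset.mem_Icc] at hv; omega
    · intro m hm; simp only [Finset.mem_Icc] at hm; omega
    · intro v hv
      simp only [Finset.mem_Icc] at hv
      rw [ZAux_nil, mul_one]
      rw [ih a (v - 1) (by omega) (by omega)]
      rw [show N + 1 - (v - 1) = (N + 1 - v) + 1 by omega]
      rw [show (((N + 1 : ℕ) : ℚ) - ((N + 1 - v : ℕ) : ℚ)) = (v : ℚ) by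
        push_cast [Nat.cast_sub (show v ≤ N + 1 by omega)]; ring]

end Stmt13Aux

namespace Stmt13Aux
open Finset

lemma binom_sq (a b : ℤ) : ∀ n : ℕ, ∃ C : ℤ,
    (a + b) ^ n = a ^ n + n * a ^ (n - 1) * b + b ^ 2 * C := by
  intro n
  induction n with
  | zero => exact ⟨0, by norm_num⟩
  | succ n ih =>
    obtain ⟨C, hC⟩ := ih
    cases n with
    | zero => exact ⟨0, by norm_num⟩
    | succ n0 =>
      refine ⟨(n0 + 1) * a ^ n0 + C * (a + b), ?_⟩
      rw [Nat.add_sub_cancel] at hC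
      rw [pow_succ, hC]
      rw [Nat.add_sub_cancel]
      push_cast
      ring

section Padic

variable {p : ℕ} [hp : Fact p.Prime]

lemma pQ_pos : (0 : ℚ) < p := by
  have := hp.out.two_le; positivity

lemma pQ_ne : ((p : ℚ)) ≠ 0 := ne_of_gt pQ_pos

lemma P2_pos : (0 : ℚ) < (p : ℚ) ^ (-2 : ℤ) := zpow_pos pQ_pos _

lemma P1_pos : (0 : ℚ) < (p : ℚ) ^ (-1 : ℤ) := zpow_pos pQ_pos _

lemma P2_eq : ((p : ℚ)) ^ (-2 : ℤ) = (p : ℚ) ^ (-1 : ℤ) * (p : ℚ) ^ (-1 : ℤ) := by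
  rw [← zpow_add₀ (pQ_ne (p := p))]
  norm_num

lemma P1_le_one : ((p : ℚ)) ^ (-1 : ℤ) ≤ 1 := by
  rw [zpow_neg, zpow_one]
  rw [inv_le_one_iff₀]
  right
  exact_mod_cast hp.out.one_lt.le

lemma P2_le_one : ((p : ℚ)) ^ (-2 : ℤ) ≤ 1 := by
  rw [P2_eq]
  calc ((p:ℚ))^(-1:ℤ) * ((p:ℚ))^(-1:ℤ) ≤ 1 * 1 :=
        mul_le_mul P1_le_one P1_le_one (le_of_lt P1_pos) zero_le_one
    _ = 1 := by ring

lemma norm_mul_le_of_le {x y : ℚ} {C D : ℚ} (hx : padicNorm p x ≤ C)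
    (hy : padicNorm p y ≤ D) (hD : 0 ≤ D) :
    padicNorm p (x * y) ≤ C * D := by
  rw [padicNorm.mul]
  exact mul_le_mul hx hy (padicNorm.nonneg y) (le_trans (padicNorm.nonneg x) hx)

lemma norm_mul_le_one_left {x y : ℚ} {D : ℚ} (hx : padicNorm p x ≤ 1)
    (hy : padicNorm p y ≤ D) (hD : 0 ≤ D) :
    padicNorm p (x * y) ≤ D := by
  have := norm_mul_le_of_le hx hy hD
  rwa [one_mul] at this

lemma norm_add_le {x y : ℚ} {C : ℚ} (hx : padicNorm p x ≤ C) (hy : padicNorm p y ≤ C) :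
    padicNorm p (x + y) ≤ C :=
  le_trans padicNorm.nonarchimedean (max_le hx hy)

lemma norm_neg_one_pow (s : ℕ) : padicNorm p ((-1 : ℚ) ^ s) = 1 := by
  rcases neg_one_pow_eq_or ℚ s with h | h <;> rw [h]
  · exact padicNorm.one
  · rw [padicNorm.neg, padicNorm.one]

lemma norm_unit {n : ℕ} (h1 : 1 ≤ n) (h2 : n < p) : padicNorm p (n : ℚ) = 1 :=
  (padicNorm.nat_eq_one_iff n).2 (Nat.not_dvd_of_pos_of_lt (by omega) h2)

lemma norm_pow_eq_one {x : ℚ} (hx : padicNorm p x = 1) (k : ℕ) :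
    padicNorm p (x ^ k) = 1 := by
  induction k with
  | zero => simpa using padicNorm.one
  | succ k ih => rw [pow_succ, padicNorm.mul, ih, hx, mul_one]

lemma norm_inv_eq_one {x : ℚ} (hx : padicNorm p x = 1) : padicNorm p x⁻¹ = 1 := by
  have hx0 : x ≠ 0 := by
    intro h; rw [h, padicNorm.zero] at hx; norm_num at hx
  have h := padicNorm.mul (p := p) x⁻¹ x
  rw [inv_mul_cancel₀ hx0, padicNorm.one, hx, mul_one] at h
  exact h.symm

lemma norm_unit_pow_inv {n : ℕ} (h1 : 1 ≤ n) (h2 : n < p) (k : ℕ) :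
    padicNorm p (((n : ℚ) ^ k)⁻¹) = 1 :=
  norm_inv_eq_one (norm_pow_eq_one (norm_unit h1 h2) k)

lemma norm_refl_factor {m : ℕ} (h1 : 1 ≤ m) (h2 : m ≤ p - 1) (k : ℕ) :
    padicNorm p ((((p : ℚ) - m) ^ k)⁻¹) = 1 := by
  have hp2 := hp.out.two_le
  have hcast : ((p : ℚ) - m) = ((p - m : ℕ) : ℚ) := by
    push_cast [Nat.cast_sub (by omega : m ≤ p)]; ring
  rw [hcast]
  exact norm_unit_pow_inv (by omega) (by omega) k

lemma ZAux_norm {M : ℕ} (hM : M ≤ p - 1) : ∀ (ls : List ℕ) (b : ℕ), 1 ≤ b →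
    padicNorm p (ZAux M ls b) ≤ 1 := by
  intro ls
  have hp2 := hp.out.two_le
  induction ls with
  | nil => intro b _; rw [ZAux_nil, padicNorm.one]
  | cons k ks ih =>
    intro b hb
    rw [ZAux_cons]
    refine padicNorm.sum_le' (fun n hn => ?_) zero_le_one
    simp only [Finset.mem_Icc] at hn
    exact norm_mul_le_one_left
      (le_of_eq (norm_unit_pow_inv (by omega) (by omega) k))
      (ih (n + 1) (by omega)) zero_le_one

lemma RAux_norm {M : ℕ} (hM : M ≤ p - 1) : ∀ (ls : List ℕ) (b : ℕ), 1 ≤ b →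
    padicNorm p (RAux p M ls b) ≤ 1 := by
  intro ls
  induction ls with
  | nil => intro b _; rw [RAux_nil, padicNorm.one]
  | cons k ks ih =>
    intro b hb
    rw [RAux_cons]
    refine padicNorm.sum_le' (fun n hn => ?_) zero_le_one
    simp only [Finset.mem_Icc] at hn
    exact norm_mul_le_one_left
      (le_of_eq (norm_refl_factor (by omega) (by omega) k))
      (ih (n + 1) (by omega)) zero_le_one

lemma c_norm {w : List Bool} (hw : ET w) {a : ℕ} (ha : a ≤ p - 1) :
    padicNorm p (c w a) ≤ 1 := by
  have hp2 := hp.out.two_le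
  rcases D_of_ET hw with rfl | ⟨t, ks, ht, hfw, hf⟩
  · rw [c_nil]
    split_ifs
    · rw [padicNorm.one]
    · rw [padicNorm.zero]; norm_num
  · rw [hf a]
    cases a with
    | zero =>
      rw [Nat.cast_zero, zero_pow (by omega : t ≠ 0), inv_zero, zero_mul, padicNorm.zero]
      norm_num
    | succ a0 =>
      exact norm_mul_le_one_left
        (le_of_eq (norm_unit_pow_inv (by omega) (by omega) t))
        (ZAux_norm (by omega) ks.reverse 1 le_rfl) zero_le_one

lemma scalar_cong {m : ℕ} (hm1 : 1 ≤ m) (hm2 : m ≤ p - 1) (l : ℕ) :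
    padicNorm p (((m : ℚ) ^ l)⁻¹
        - (-1 : ℚ) ^ l * ((((p : ℚ) - m) ^ l)⁻¹
            + (l : ℚ) * p * (((p : ℚ) - m) ^ (l + 1))⁻¹))
      ≤ (p : ℚ) ^ (-2 : ℤ) := by
  have hp2 := hp.out.two_le
  have hmp : m < p := by omega
  set q : ℕ := p - m with hq
  have hq1 : 1 ≤ q := by omega
  have hqp : q < p := by omega
  have hcast : (p : ℚ) - m = (q : ℚ) := by
    rw [hq, Nat.cast_sub (by omega : m ≤ p)]
  have hmQ : ((m : ℚ)) ≠ 0 := by positivity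
  have hqQ : ((q : ℚ)) ≠ 0 := by positivity
  set A : ℤ := (q : ℤ) ^ (l + 1) - (-1 : ℤ) ^ l * ((m : ℤ) ^ l * q + l * p * (m : ℤ) ^ l)
    with hA
  have hdvd : ((p : ℤ)) ^ 2 ∣ A := by
    obtain ⟨C, hC⟩ := binom_sq (-(m : ℤ)) (p : ℤ) (l + 1)
    rw [Nat.add_sub_cancel] at hC
    refine ⟨C, ?_⟩
    have hqZ : (q : ℤ) = -(m : ℤ) + p := by omega
    rw [hA, hqZ, hC]
    have h1 : (-(m : ℤ)) ^ (l + 1) = -((-1 : ℤ) ^ l * (m : ℤ) ^ (l + 1)) := by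
      rw [neg_pow, neg_pow, pow_succ (-1 : ℤ)]
      ring
    have h2 : (-(m : ℤ)) ^ l = (-1 : ℤ) ^ l * (m : ℤ) ^ l := by rw [neg_pow]
    rw [h1, h2]
    push_cast
    ring
  have hfrac : ((m : ℚ) ^ l)⁻¹
        - (-1 : ℚ) ^ l * (((q : ℚ) ^ l)⁻¹ + (l : ℚ) * p * ((q : ℚ) ^ (l + 1))⁻¹)
      = ((A : ℤ) : ℚ) / ((m : ℚ) ^ l * (q : ℚ) ^ (l + 1)) := by
    rw [hA]
    push_cast
    field_simp
    ring
  rw [hcast, hfrac, padicNorm.div]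
  have hden : padicNorm p ((m : ℚ) ^ l * (q : ℚ) ^ (l + 1)) = 1 := by
    rw [padicNorm.mul, norm_pow_eq_one (norm_unit hm1 hmp) l,
      norm_pow_eq_one (norm_unit hq1 hqp) (l + 1), mul_one]
  rw [hden, div_one]
  have := (padicNorm.dvd_iff_norm_le (p := p) (n := 2) (z := A)).1 (by exact_mod_cast hdvd)
  exact_mod_cast this
end Padic

end Stmt13Aux

namespace Stmt13Aux
open Finset

/-- The key expression whose `p`-adic norm we bound. -/
def KE (p M : ℕ) (L : List ℕ) (b : ℕ) : ℚ :=
  ZAux M L b - (-1 : ℚ) ^ L.sum * (RAux p M L b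
    + p * ∑ i : Fin L.length, (L.get i : ℚ) * RAux p M (L.set i (L.get i + 1)) b)

def Gfun (p M l : ℕ) (L : List ℕ) (m : ℕ) : ℚ :=
  ((m : ℚ) ^ l)⁻¹ * ZAux M L (m + 1)
    - (-1 : ℚ) ^ l * (-1 : ℚ) ^ L.sum *
      ((((p : ℚ) - m) ^ l)⁻¹ * RAux p M L (m + 1)
        + (p : ℚ) * ((l : ℚ) * ((((p : ℚ) - m) ^ (l + 1))⁻¹ * RAux p M L (m + 1))
          + (((p : ℚ) - m) ^ l)⁻¹ *
              ∑ i : Fin L.length, (L.get i : ℚ) * RAux p M (L.set i (L.get i + 1)) (m + 1)))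

lemma sum_comb (s : Finset ℕ) (t1 t2 t3 t4 : ℕ → ℚ) (c d e : ℚ) :
    (∑ m ∈ s, t1 m) - c * ((∑ m ∈ s, t2 m) + d * (e * (∑ m ∈ s, t3 m) + ∑ m ∈ s, t4 m))
      = ∑ m ∈ s, (t1 m - c * (t2 m + d * (e * t3 m + t4 m))) := by
  simp only [mul_add, Finset.mul_sum, Finset.sum_sub_distrib, Finset.sum_add_distrib]

lemma get_cons_succ' (a : ℕ) (L : List ℕ) (i : Fin L.length) :
    (a :: L).get i.succ = L.get i := rfl

lemma KE_cons (p M l : ℕ) (L : List ℕ) (b : ℕ) :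
    KE p M (l :: L) b = ∑ m ∈ Finset.Icc b M, Gfun p M l L m := by
  unfold KE
  simp only [List.sum_cons, List.length_cons]
  rw [Fin.sum_univ_succ]
  simp only [List.get_cons_zero, Fin.val_zero, List.set_cons_zero, Fin.val_succ,
    get_cons_succ', List.set_cons_succ]
  have hinner : ∀ i : Fin L.length,
      (L.get i : ℚ) * RAux p M (l :: L.set (i : ℕ) (L.get i + 1)) b
        = ∑ m ∈ Finset.Icc b M,
            (((p : ℚ) - m) ^ l)⁻¹ *
              ((L.get i : ℚ) * RAux p M (L.set (i : ℕ) (L.get i + 1)) (m + 1)) := by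
    intro i
    rw [RAux_cons, Finset.mul_sum]
    exact Finset.sum_congr rfl fun m _ => by ring
  have hswap : (∑ i : Fin L.length,
        (L.get i : ℚ) * RAux p M (l :: L.set (i : ℕ) (L.get i + 1)) b)
      = ∑ m ∈ Finset.Icc b M, ∑ i : Fin L.length,
          (((p : ℚ) - m) ^ l)⁻¹ *
            ((L.get i : ℚ) * RAux p M (L.set (i : ℕ) (L.get i + 1)) (m + 1)) := by
    rw [Finset.sum_congr rfl (fun i _ => hinner i)]
    exact Finset.sum_comm
  rw [hswap, ZAux_cons, RAux_cons, RAux_cons, pow_add]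
  have hpersum : ∀ m : ℕ, Gfun p M l L m
      = (((m : ℚ) ^ l)⁻¹ * ZAux M L (m + 1))
        - (-1 : ℚ) ^ l * (-1 : ℚ) ^ L.sum *
          ((((((p : ℚ) - m) ^ l)⁻¹) * RAux p M L (m + 1))
            + (p : ℚ) * ((l : ℚ) * ((((p : ℚ) - m) ^ (l + 1))⁻¹ * RAux p M L (m + 1))
              + ∑ i : Fin L.length,
                  (((p : ℚ) - m) ^ l)⁻¹ *
                    ((L.get i : ℚ) * RAux p M (L.set (i : ℕ) (L.get i + 1)) (m + 1)))) := by
    intro m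
    unfold Gfun
    rw [Finset.mul_sum]
  rw [Finset.sum_congr rfl (fun m (_ : m ∈ Finset.Icc b M) => hpersum m)]
  exact sum_comb (Finset.Icc b M) _ _ _ _ _ _ _

lemma key_cong {p : ℕ} [hp : Fact p.Prime] {M : ℕ} (hM : M ≤ p - 1) :
    ∀ (L : List ℕ) (b : ℕ), 1 ≤ b → padicNorm p (KE p M L b) ≤ (p : ℚ) ^ (-2 : ℤ) := by
  intro L
  induction L with
  | nil =>
    intro b hb
    have h0 : KE p M [] b = 0 := by
      unfold KE
      simp
    rw [h0, padicNorm.zero]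
    exact le_of_lt P2_pos
  | cons l L ih =>
    intro b hb
    rw [KE_cons]
    refine padicNorm.sum_le' (fun m hm => ?_) (le_of_lt P2_pos)
    simp only [Finset.mem_Icc] at hm
    have hp2 := hp.out.two_le
    have hm1 : 1 ≤ m := by omega
    have hmp : m < p := by omega
    have hmP : m ≤ p - 1 := by omega
    set A := ZAux M L (m + 1) with hA
    set B := RAux p M L (m + 1) with hB
    set Cs := ∑ i : Fin L.length, (L.get i : ℚ) * RAux p M (L.set i (L.get i + 1)) (m + 1)
      with hCs
    set X := (-1 : ℚ) ^ L.sum * (B + (p : ℚ) * Cs) with hX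
    set x := (p : ℚ) - m with hx
    set κ := (-1 : ℚ) ^ l * ((x ^ l)⁻¹ + (l : ℚ) * p * (x ^ (l + 1))⁻¹) with hκ
    have hKEL : KE p M L (m + 1) = A - X := by
      unfold KE
      rw [← hA, ← hB, ← hCs, ← hX]
    have hIH : padicNorm p (A - X) ≤ (p : ℚ) ^ (-2 : ℤ) := by
      rw [← hKEL]; exact ih (m + 1) (by omega)
    have hdecomp : Gfun p M l L m
        = ((m : ℚ) ^ l)⁻¹ * (A - X) + (((m : ℚ) ^ l)⁻¹ - κ) * X
          + (-1 : ℚ) ^ l * (-1 : ℚ) ^ L.sum *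
              ((l : ℚ) * ((x ^ (l + 1))⁻¹ * ((p : ℚ) * ((p : ℚ) * Cs)))) := by
      unfold Gfun
      rw [hX, hκ, hA, hB, hCs, hx]
      ring
    rw [hdecomp]
    have hBnorm : padicNorm p B ≤ 1 := by
      rw [hB]; exact RAux_norm hM L (m + 1) (by omega)
    have hCsnorm : padicNorm p Cs ≤ 1 := by
      rw [hCs]
      refine padicNorm.sum_le' (fun i _ => ?_) zero_le_one
      exact norm_mul_le_one_left (padicNorm.of_nat _)
        (RAux_norm hM _ (m + 1) (by omega)) zero_le_one
    have hpnorm : padicNorm p ((p : ℕ) : ℚ) = (p : ℚ) ^ (-1 : ℤ) := by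
      rw [padicNorm.padicNorm_p_of_prime, zpow_neg, zpow_one]
    have hpCs : padicNorm p ((p : ℚ) * Cs) ≤ (p : ℚ) ^ (-1 : ℤ) := by
      have h := norm_mul_le_of_le (le_of_eq hpnorm) hCsnorm zero_le_one
      rwa [mul_one] at h
    have hXnorm : padicNorm p X ≤ 1 := by
      rw [hX]
      exact norm_mul_le_one_left (le_of_eq (norm_neg_one_pow _))
        (norm_add_le hBnorm (le_trans hpCs P1_le_one)) zero_le_one
    have t_a : padicNorm p (((m : ℚ) ^ l)⁻¹ * (A - X)) ≤ (p : ℚ) ^ (-2 : ℤ) :=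
      norm_mul_le_one_left (le_of_eq (norm_unit_pow_inv hm1 hmp l)) hIH (le_of_lt P2_pos)
    have t_b : padicNorm p ((((m : ℚ) ^ l)⁻¹ - κ) * X) ≤ (p : ℚ) ^ (-2 : ℤ) := by
      have hsc : padicNorm p (((m : ℚ) ^ l)⁻¹ - κ) ≤ (p : ℚ) ^ (-2 : ℤ) := by
        rw [hκ, hx]
        exact scalar_cong hm1 hmP l
      have h := norm_mul_le_of_le hsc hXnorm zero_le_one
      rwa [mul_one] at h
    have t_c : padicNorm p ((-1 : ℚ) ^ l * (-1 : ℚ) ^ L.sum *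
          ((l : ℚ) * ((x ^ (l + 1))⁻¹ * ((p : ℚ) * ((p : ℚ) * Cs)))))
        ≤ (p : ℚ) ^ (-2 : ℤ) := by
      have h1 : padicNorm p ((p : ℚ) * ((p : ℚ) * Cs)) ≤ (p : ℚ) ^ (-2 : ℤ) := by
        rw [P2_eq]
        exact norm_mul_le_of_le (le_of_eq hpnorm) hpCs (le_of_lt P1_pos)
      have h2 : padicNorm p ((x ^ (l + 1))⁻¹ * ((p : ℚ) * ((p : ℚ) * Cs)))
          ≤ (p : ℚ) ^ (-2 : ℤ) :=
        norm_mul_le_one_left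
          (le_of_eq (by rw [hx]; exact norm_refl_factor hm1 hmP (l + 1))) h1
          (le_of_lt P2_pos)
      have h3 : padicNorm p ((l : ℚ) * ((x ^ (l + 1))⁻¹ * ((p : ℚ) * ((p : ℚ) * Cs))))
          ≤ (p : ℚ) ^ (-2 : ℤ) :=
        norm_mul_le_one_left (padicNorm.of_nat _) h2 (le_of_lt P2_pos)
      have hpm : padicNorm p ((-1 : ℚ) ^ l * (-1 : ℚ) ^ L.sum) ≤ 1 := by
        rw [padicNorm.mul, norm_neg_one_pow, norm_neg_one_pow]
        norm_num
      exact norm_mul_le_one_left hpm h3 (le_of_lt P2_pos)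
    exact norm_add_le (norm_add_le t_a t_b) t_c

end Stmt13Aux

namespace Stmt13Aux
open Finset

lemma ZR_shW (p : ℕ) (K L : List ℕ) :
    ZR p (shW K L)
      = ((shuffles (toWord K) (toWord L)).map fun w => Z p (fromWord w)).sum := by
  unfold shW ZR
  generalize shuffles (toWord K) (toWord L) = S
  induction S using Multiset.induction_on with
  | empty => simp
  | cons a s ih =>
    rw [Multiset.map_cons, Multiset.map_cons, Multiset.sum_cons, Multiset.sum_cons]
    rw [Finsupp.sum_add_index' (fun ks => zero_mul (Z p ks))
      (fun ks q1 q2 => add_mul q1 q2 (Z p ks))]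
    rw [ih]
    congr 1
    rw [Finsupp.sum_single_index (zero_mul (Z p (fromWord a))), one_mul]

lemma LHS_eval {p : ℕ} (K L : List ℕ) (hK : ∀ x ∈ K, 0 < x) (hL : ∀ x ∈ L, 0 < x) :
    ZR p (shW K L)
      = ∑ a ∈ Finset.range ((p - 1) + 1),
          c (toWord K) a * ZAux (p - 1 - a) L 1 := by
  rw [ZR_shW]
  have hstep1 : ∀ w ∈ shuffles (toWord K) (toWord L),
      Z p (fromWord w) = ∑ m ∈ Finset.range ((p - 1) + 1), c w m := fun w hw =>
    (B_of_ET (ET_of_mem_shuffles _ _ w (ET_toWord K) (ET_toWord L) hw) (p - 1)).symm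
  rw [Multiset.map_congr rfl hstep1, multiset_sum_map_sum]
  have hstep2 : ∀ m ∈ Finset.range ((p - 1) + 1),
      ((shuffles (toWord K) (toWord L)).map fun w => c w m).sum
        = ∑ a ∈ Finset.range (m + 1), c (toWord K) a * c (toWord L) (m - a) :=
    fun m _ => c_shuffle _ _ (ET_toWord K) (ET_toWord L) m
  rw [Finset.sum_congr rfl hstep2]
  rw [← conv_aux2 ((p - 1) + 1) (fun a => c (toWord K) a) (fun m => c (toWord L) m)]
  rw [Finset.sum_range_succ]
  have hz : c (toWord K) ((p - 1) + 1)
      * ∑ m ∈ Finset.range ((p - 1) + 1 - ((p - 1) + 1)), c (toWord L) m = 0 := by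
    simp
  rw [hz, add_zero]
  refine Finset.sum_congr rfl fun a ha => ?_
  simp only [Finset.mem_range] at ha
  rw [show (p - 1) + 1 - a = (p - 1 - a) + 1 by omega]
  rw [B_of_ET (ET_toWord L) (p - 1 - a), fromWord_toWord L hL]

lemma Z_split_reflect {p : ℕ} (hp1 : 1 ≤ p) (K ls : List ℕ) (hK : ∀ x ∈ K, 0 < x) :
    Z p (K ++ ls.reverse)
      = ∑ a ∈ Finset.range ((p - 1) + 1),
          c (toWord K) a * RAux p (p - 1 - a) ls 1 := by
  unfold Z
  have hsplit := ZAux_split (ET_toWord K) ls.reverse (p - 1)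
  rw [fromWord_toWord K hK] at hsplit
  rw [hsplit]
  refine Finset.sum_congr rfl fun a ha => ?_
  simp only [Finset.mem_range] at ha
  congr 1
  rw [ZAux_reflect (p - 1) ls a (p - 1) (by omega) le_rfl]
  rw [show (p - 1) + 1 = p by omega, show p - (p - 1) = 1 by omega]

lemma swap_abs {ι : Type*} (s : Finset ℕ) (t : Finset ι) (cu : ℕ → ℚ) (ge : ι → ℚ)
    (Ri : ι → ℕ → ℚ) :
    ∑ i ∈ t, ge i * (∑ a ∈ s, cu a * Ri i a)
      = ∑ a ∈ s, cu a * (∑ i ∈ t, ge i * Ri i a) := by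
  simp only [Finset.mul_sum]
  rw [Finset.sum_comm]
  exact Finset.sum_congr rfl fun a _ => Finset.sum_congr rfl fun i _ => by ring

lemma sum_comb3 (s : Finset ℕ) (t1 t2 t3 : ℕ → ℚ) (c d : ℚ) :
    (∑ m ∈ s, t1 m) - c * ((∑ m ∈ s, t2 m) + d * ∑ m ∈ s, t3 m)
      = ∑ m ∈ s, (t1 m - c * (t2 m + d * t3 m)) := by
  simp only [mul_add, Finset.mul_sum, Finset.sum_sub_distrib, Finset.sum_add_distrib]

end Stmt13Aux


open Stmt13Aux in
/-- The shuffle relation for finite multiple zeta values in 𝒜₂ (Murahara–Onozuka–Seki, Lemma 2,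
Seki / Jarossay). -/
theorem stmt13 (K L : List ℕ) (hK : ∀ x ∈ K, 0 < x) (hL : ∀ x ∈ L, 0 < x) :
    ∀ᶠ p in Filter.cofinite, p.Prime →
      congrMod p 2 (ZR p (shW K L))
        ((-1 : ℚ) ^ L.sum *
          (Z p (K ++ L.reverse) +
            p * ∑ i : Fin L.length,
              (L.get i : ℚ) * Z p (K ++ (L.set i (L.get i + 1)).reverse))) := by
  refine Filter.Eventually.of_forall (fun p hpp => ?_)
  haveI : Fact p.Prime := ⟨hpp⟩
  have hp2 := hpp.two_le
  unfold congrMod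
  rw [show (-((2 : ℕ) : ℤ)) = (-2 : ℤ) by norm_num]
  rw [LHS_eval K L hK hL]
  rw [Z_split_reflect (by omega) K L hK]
  have hS : (∑ i : Fin L.length,
        (L.get i : ℚ) * Z p (K ++ (L.set i (L.get i + 1)).reverse))
      = ∑ i : Fin L.length, (L.get i : ℚ) *
          ∑ a ∈ Finset.range ((p - 1) + 1),
            c (toWord K) a * RAux p (p - 1 - a) (L.set i (L.get i + 1)) 1 :=
    Finset.sum_congr rfl fun i _ => by
      rw [Z_split_reflect (by omega) K (L.set i (L.get i + 1)) hK]
  rw [hS]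
  rw [swap_abs (Finset.range ((p - 1) + 1)) Finset.univ (fun a => c (toWord K) a)
    (fun i : Fin L.length => (L.get i : ℚ))
    (fun i a => RAux p (p - 1 - a) (L.set i (L.get i + 1)) 1)]
  rw [sum_comb3 (Finset.range ((p - 1) + 1))
    (fun a => c (toWord K) a * ZAux (p - 1 - a) L 1)
    (fun a => c (toWord K) a * RAux p (p - 1 - a) L 1)
    (fun a => c (toWord K) a *
      ∑ i : Fin L.length, (L.get i : ℚ) * RAux p (p - 1 - a) (L.set i (L.get i + 1)) 1)
    ((-1 : ℚ) ^ L.sum) ((p : ℕ) : ℚ)]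
  have hKE : ∀ a ∈ Finset.range ((p - 1) + 1),
      (c (toWord K) a * ZAux (p - 1 - a) L 1
        - (-1 : ℚ) ^ L.sum * (c (toWord K) a * RAux p (p - 1 - a) L 1
          + ((p : ℕ) : ℚ) * (c (toWord K) a *
              ∑ i : Fin L.length,
                (L.get i : ℚ) * RAux p (p - 1 - a) (L.set i (L.get i + 1)) 1)))
        = c (toWord K) a * KE p (p - 1 - a) L 1 := by
    intro a _
    unfold KE
    ring
  rw [Finset.sum_congr rfl hKE]
  refine padicNorm.sum_le' (fun a ha => ?_) (le_of_lt P2_pos)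
  simp only [Finset.mem_range] at ha
  exact norm_mul_le_one_left (c_norm (ET_toWord K) (by omega : a ≤ p - 1))
    (key_cong (by omega : p - 1 - a ≤ p - 1) L 1 le_rfl) (le_of_lt P2_pos)
end
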